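/- Let u(x,t) = ∫_{ℝⁿ} (4πt)^{-n/2} exp(-|x-ξ|²/(4t)) dμ(ξ) be a nonnegative solution of the heat equation on ℝⁿ × (0,∞) represented by a Radon measure μ, and let α ∈ [0,n]. Then the set S_α(u) = { x ∈ ℝⁿ : limsup_{t→0⁺} t^{α/2} u(x,t) = +∞ } satisfies H^{n-α}(S_α(u)) = 0. -/

import Mathlib

open MeasureTheory Filter Metric Set

noncomputable def heatK (n : ℕ) (x : EuclideanSpace ℝ (Fin n)) (t : ℝ) : ℝ :=
  (4 * Real.pi * t) ^ (-(n : ℝ) / 2) * Real.exp (-‖x‖ ^ 2 / (4 * t))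

open scoped ENNReal NNReal Topology

/-!
Near a point `x` with `μ (closedBall x r) ≤ M r ^ (n - α)` for all small `r`, cutting `ℝⁿ` into the
shells `j √t ≤ |x - ξ| < (j + 1) √t` bounds the contribution of a small ball `closedBall x ρ` to
`t ^ (α / 2) u(x, t)` by `(4π) ^ (-n / 2) M ∑ⱼ (j + 1) ^ (n - α) exp (-j ^ 2 / 4)`, while the rest
is at most a multiple of `t ^ (-(n - α) / 2) exp (-ρ ^ 2 / (8 t)) u(x, 2)`, which tends to `0`.
So `S_α(u)` lies in the set where `μ` has infinite upper `(n - α)`-density. Since `u(·, 1)` is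
finite, `μ` is locally finite, and then that set is `H^(n - α)`-null by Vitali: around its points
there are disjoint balls `B(b, r_b)` of mass at least `M r_b ^ (n - α)` whose fourfold enlargements
cover it, so its Hausdorff measure is at most `8 ^ (n - α) / M` times the mass of a neighbourhood.
-/

section InfiniteDensity

lemma exists_disjoint_closedBall_cover_of_frequently {X : Type*} [PseudoMetricSpace X]
    {T : Set X} {P : X → ℝ → Prop} (hT : ∀ x ∈ T, ∃ᶠ r in 𝓝[>] 0, P x r) {δ : ℝ} (hδ : 0 < δ) :
    ∃ u ⊆ T, ∃ rad : X → ℝ, (∀ b ∈ u, rad b ∈ Ioc 0 δ ∧ P b (rad b)) ∧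
      u.PairwiseDisjoint (fun b => closedBall b (rad b)) ∧
      T ⊆ ⋃ b ∈ u, closedBall b (4 * rad b) := by
  have : ∀ x ∈ T, ∃ r ∈ Ioo 0 δ, P x r := fun x hx =>
    ((hT x hx).and_eventually (Ioo_mem_nhdsGT hδ)).exists.imp fun r h => ⟨h.2, h.1⟩
  choose! rad hrad hP using this
  obtain ⟨u, huT, hdisj, hcov⟩ := Vitali.exists_disjoint_subfamily_covering_enlargement_closedBall
    T id rad δ (fun a ha => (hrad a ha).2.le) 4 (by norm_num)
  refine ⟨u, huT, rad, fun b hb => ⟨Ioo_subset_Ioc_self (hrad b (huT hb)), hP b (huT hb)⟩,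
    hdisj, fun x hx => ?_⟩
  obtain ⟨b, hb, hxb⟩ := hcov x hx
  exact mem_biUnion hb (hxb (mem_closedBall_self (hrad x hx).1.le))

lemma ediam_closedBall_le {X : Type*} [PseudoMetricSpace X] (x : X) {r : ℝ} (hr : 0 ≤ r) :
    ediam (closedBall x r) ≤ ENNReal.ofReal (2 * r) := by
  rw [← closedEBall_ofReal hr, ENNReal.ofReal_mul zero_le_two, ENNReal.ofReal_ofNat]
  exact ediam_closedEBall_le

variable {X : Type*} [MetricSpace X] [MeasurableSpace X] [BorelSpace X]
    [TopologicalSpace.SeparableSpace X]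

lemma hausdorffMeasure_le_of_frequently_le_measure (μ : Measure X) {d : ℝ} (hd : 0 ≤ d) {c : ℝ≥0}
    (hc : c ≠ 0) {T U : Set X}
    (hT : ∀ x ∈ T, ∃ᶠ r in 𝓝[>] 0,
      (c : ℝ≥0∞) * ENNReal.ofReal (r ^ d) ≤ μ (closedBall x r) ∧ closedBall x r ⊆ U) :
    μH[d] T ≤ (c : ℝ≥0∞)⁻¹ * ENNReal.ofReal (8 ^ d) * μ U := by
  choose u huT rad hrad hdisj hcov using fun m : ℕ =>
    exists_disjoint_closedBall_cover_of_frequently hT (Nat.one_div_pos_of_nat (n := m) (α := ℝ))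
  have hcount : ∀ m, (u m).Countable := fun m =>
    ((hdisj m).mono fun b => ball_subset_closedBall).countable_of_isOpen (fun _ _ => isOpen_ball)
      fun b hb => nonempty_ball.2 (hrad m b hb).1.1
  have (m : ℕ) : Countable (u m) := (hcount m).to_subtype
  have hsum : ∀ m, ∑' b : u m, ediam (closedBall (b : X) (4 * rad m b)) ^ d
      ≤ (c : ℝ≥0∞)⁻¹ * ENNReal.ofReal (8 ^ d) * μ U := by
    intro m
    calc ∑' b : u m, ediam (closedBall (b : X) (4 * rad m b)) ^ d
        ≤ ∑' b : u m, (c : ℝ≥0∞)⁻¹ * ENNReal.ofReal (8 ^ d) * μ (closedBall (b : X) (rad m b)) := by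
          refine ENNReal.tsum_le_tsum fun b => ?_
          obtain ⟨⟨hr0, -⟩, hcμ, -⟩ := hrad m b b.2
          calc ediam (closedBall (b : X) (4 * rad m b)) ^ d
              ≤ ENNReal.ofReal (2 * (4 * rad m b)) ^ d :=
                ENNReal.rpow_le_rpow (ediam_closedBall_le _ (by positivity)) hd
            _ = ENNReal.ofReal (8 ^ d) * ENNReal.ofReal (rad m b ^ d) := by
                rw [ENNReal.ofReal_rpow_of_nonneg (by positivity) hd, ← mul_assoc,
                  Real.mul_rpow (by norm_num) hr0.le, ENNReal.ofReal_mul (by positivity)]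
                norm_num
            _ ≤ ENNReal.ofReal (8 ^ d) * ((c : ℝ≥0∞)⁻¹ * μ (closedBall (b : X) (rad m b))) := by
                gcongr
                exact (ENNReal.mul_le_iff_le_inv (by simpa using hc) ENNReal.coe_ne_top).1 hcμ
            _ = _ := by ring
      _ = (c : ℝ≥0∞)⁻¹ * ENNReal.ofReal (8 ^ d) * μ (⋃ b ∈ u m, closedBall b (rad m b)) := by
          rw [ENNReal.tsum_mul_left, measure_biUnion (hcount m) (hdisj m)
            fun _ _ => measurableSet_closedBall]
      _ ≤ (c : ℝ≥0∞)⁻¹ * ENNReal.ofReal (8 ^ d) * μ U := by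
          gcongr
          exact iUnion₂_subset fun b hb => (hrad m b hb).2.2
  calc μH[d] T ≤ liminf (fun m => ∑' b : u m, ediam (closedBall (b : X) (4 * rad m b)) ^ d) atTop :=
        Measure.hausdorffMeasure_le_liminf_tsum d T
          (fun m : ℕ => ENNReal.ofReal (8 * (1 / (m + 1)))) ?_
          (fun m (b : u m) => closedBall (b : X) (4 * rad m b)) ?_ ?_
    _ ≤ _ := liminf_le_of_frequently_le (Frequently.of_forall hsum)
  · simpa using ENNReal.tendsto_ofReal
      ((tendsto_one_div_add_atTop_nhds_zero_nat).const_mul 8)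
  · refine Eventually.of_forall fun m b => ?_
    obtain ⟨⟨hr0, hrδ⟩, -⟩ := hrad m b b.2
    refine (ediam_closedBall_le _ (by positivity)).trans (ENNReal.ofReal_le_ofReal ?_)
    linarith
  · exact Eventually.of_forall fun m => (hcov m).trans fun y hy => by
      simp only [mem_iUnion] at hy ⊢
      obtain ⟨b, hb, hyb⟩ := hy
      exact ⟨⟨b, hb⟩, hyb⟩

theorem hausdorffMeasure_setOf_frequently_le_measure_closedBall_eq_zero (μ : Measure X)
    [IsLocallyFiniteMeasure μ] {d : ℝ} (hd : 0 ≤ d) :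
    μH[d] {x | ∀ M : ℝ≥0, ∃ᶠ r in 𝓝[>] 0,
      (M : ℝ≥0∞) * ENNReal.ofReal (r ^ d) ≤ μ (closedBall x r)} = 0 := by
  refine measure_null_of_locally_null _ fun x hx => ?_
  obtain ⟨ε, hε, hεμ⟩ : ∃ ε > 0, μ (ball x ε) ≠ ⊤ := by
    obtain ⟨U, hU, hUμ⟩ := μ.finiteAt_nhds x
    obtain ⟨ε, hε, hεU⟩ := nhds_basis_ball.mem_iff.1 hU
    exact ⟨ε, hε, (measure_mono hεU).trans_lt hUμ |>.ne⟩
  have htend := ENNReal.Tendsto.mul_const ENNReal.tendsto_inv_nat_nhds_zero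
    (.inr (ENNReal.mul_ne_top ENNReal.ofReal_ne_top hεμ) :
      _ ∨ ENNReal.ofReal (8 ^ d) * μ (ball x ε) ≠ ⊤)
  rw [zero_mul] at htend
  refine ⟨_, inter_mem_nhdsWithin _ (ball_mem_nhds x (half_pos hε)),
    le_antisymm (ge_of_tendsto htend ((eventually_gt_atTop 0).mono fun m hm => ?_)) bot_le⟩
  rw [← mul_assoc]
  refine hausdorffMeasure_le_of_frequently_le_measure μ hd (c := m) (by positivity)
    fun y hy => (hy.1 m).and_eventually ?_
  filter_upwards [Ioo_mem_nhdsGT (half_pos hε)] with r hr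
  exact closedBall_subset_ball' (by linarith [mem_ball.1 hy.2, hr.2])

end InfiniteDensity

section GaussianMean

lemma summable_add_one_rpow_mul_exp_neg_sq {d : ℝ} (hd : 0 ≤ d) :
    Summable fun j : ℕ => ((j : ℝ) + 1) ^ d * Real.exp (-(j : ℝ) ^ 2 / 4) := by
  refine (Real.summable_exp_neg_nat.mul_left (Real.exp ((d + 1) ^ 2))).of_nonneg_of_le
    (fun j => by positivity) fun j => ?_
  calc ((j : ℝ) + 1) ^ d * Real.exp (-(j : ℝ) ^ 2 / 4)
      ≤ Real.exp j ^ d * Real.exp (-(j : ℝ) ^ 2 / 4) := by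
        gcongr
        exact Real.add_one_le_exp j
    _ = Real.exp (j * d - (j : ℝ) ^ 2 / 4) := by
        rw [← Real.exp_mul, ← Real.exp_add]
        ring_nf
    _ ≤ Real.exp ((d + 1) ^ 2) * Real.exp (-j) := by
        rw [← Real.exp_add]
        gcongr
        nlinarith [sq_nonneg ((j : ℝ) / 2 - (d + 1))]

lemma exp_neg_sq_div_le_mul {r ρ t : ℝ} (hρr : ρ ≤ r) (hρ : 0 ≤ ρ) (ht : 0 < t) (ht1 : t ≤ 1) :
    Real.exp (-r ^ 2 / (4 * t)) ≤ Real.exp (-ρ ^ 2 / (8 * t)) * Real.exp (-r ^ 2 / 8) := by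
  rw [← Real.exp_add]
  refine Real.exp_le_exp.2 ?_
  rw [div_add_div _ _ (by positivity) (by positivity),
    div_le_div_iff₀ (by positivity) (by positivity)]
  have hρr2 : ρ ^ 2 ≤ r ^ 2 := pow_le_pow_left₀ hρ hρr 2
  have htr : t * r ^ 2 ≤ r ^ 2 := by nlinarith [sq_nonneg r]
  nlinarith [mul_le_mul_of_nonneg_left hρr2 ht.le, mul_le_mul_of_nonneg_left htr ht.le]

lemma tendsto_rpow_mul_exp_neg_div_nhdsGT_zero (s : ℝ) {b : ℝ} (hb : 0 < b) :
    Tendsto (fun t : ℝ => t ^ s * Real.exp (-b / t)) (𝓝[>] 0) (𝓝 0) := by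
  refine ((tendsto_rpow_mul_exp_neg_mul_atTop_nhds_zero (-s) b hb).comp
    tendsto_inv_nhdsGT_zero).congr' ?_
  filter_upwards [self_mem_nhdsWithin] with t (ht : 0 < t)
  rw [Function.comp_apply, Real.inv_rpow ht.le, Real.rpow_neg ht.le, inv_inv, div_eq_mul_inv,
    neg_mul]

variable {X : Type*} [PseudoMetricSpace X]

lemma ofReal_exp_neg_dist_sq_le_tsum (x ξ : X) {t : ℝ} (ht : 0 < t) :
    ENNReal.ofReal (Real.exp (-dist x ξ ^ 2 / (4 * t))) ≤
      ∑' j : ℕ, ENNReal.ofReal (Real.exp (-(j : ℝ) ^ 2 / 4)) *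
        (closedBall x (((j : ℝ) + 1) * √t)).indicator 1 ξ := by
  set j := ⌊dist x ξ / √t⌋₊
  have hs : 0 < √t := Real.sqrt_pos.2 ht
  refine le_trans ?_ (ENNReal.le_tsum j)
  have hξ : ξ ∈ closedBall x (((j : ℝ) + 1) * √t) := by
    rw [mem_closedBall, dist_comm]
    exact ((div_lt_iff₀ hs).1 (Nat.lt_floor_add_one _)).le
  rw [indicator_of_mem hξ, Pi.one_apply, mul_one]
  refine ENNReal.ofReal_le_ofReal (Real.exp_le_exp.2 ?_)
  rw [neg_div, neg_div, neg_le_neg_iff]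
  have hj : (j : ℝ) ≤ dist x ξ / √t := Nat.floor_le (by positivity)
  calc (j : ℝ) ^ 2 / 4 ≤ (dist x ξ / √t) ^ 2 / 4 := by gcongr
    _ = dist x ξ ^ 2 / (4 * t) := by
        rw [div_pow, Real.sq_sqrt ht.le]
        ring

variable [MeasurableSpace X] [OpensMeasurableSpace X]

lemma lintegral_exp_neg_dist_sq_le (ν : Measure X) (x : X) {d : ℝ} (hd : 0 ≤ d) {M : ℝ≥0∞}
    (hν : ∀ r, 0 < r → ν (closedBall x r) ≤ M * ENNReal.ofReal (r ^ d)) {t : ℝ} (ht : 0 < t) :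
    ∫⁻ ξ, ENNReal.ofReal (Real.exp (-dist x ξ ^ 2 / (4 * t))) ∂ν ≤
      M * ENNReal.ofReal
        (t ^ (d / 2) * ∑' j : ℕ, ((j : ℝ) + 1) ^ d * Real.exp (-(j : ℝ) ^ 2 / 4)) := by
  have hs : 0 < √t := Real.sqrt_pos.2 ht
  calc ∫⁻ ξ, ENNReal.ofReal (Real.exp (-dist x ξ ^ 2 / (4 * t))) ∂ν
      ≤ ∫⁻ ξ, ∑' j : ℕ, ENNReal.ofReal (Real.exp (-(j : ℝ) ^ 2 / 4)) *
          (closedBall x (((j : ℝ) + 1) * √t)).indicator 1 ξ ∂ν :=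
        lintegral_mono fun ξ => ofReal_exp_neg_dist_sq_le_tsum x ξ ht
    _ = ∑' j : ℕ, ENNReal.ofReal (Real.exp (-(j : ℝ) ^ 2 / 4)) *
          ν (closedBall x (((j : ℝ) + 1) * √t)) := by
        rw [lintegral_tsum fun j =>
          ((measurable_one.indicator measurableSet_closedBall).const_mul _).aemeasurable]
        congr 1 with j
        rw [lintegral_const_mul _ (measurable_one.indicator measurableSet_closedBall),
          lintegral_indicator_one measurableSet_closedBall]
    _ ≤ ∑' j : ℕ, ENNReal.ofReal (Real.exp (-(j : ℝ) ^ 2 / 4)) *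
          (M * ENNReal.ofReal ((((j : ℝ) + 1) * √t) ^ d)) := by
        gcongr with j
        exact hν _ (by positivity)
    _ = M * ∑' j : ℕ, ENNReal.ofReal (t ^ (d / 2) * (((j : ℝ) + 1) ^ d *
          Real.exp (-(j : ℝ) ^ 2 / 4))) := by
        rw [← ENNReal.tsum_mul_left]
        congr 1 with j
        rw [Real.mul_rpow (by positivity) hs.le, Real.sqrt_eq_rpow, ← Real.rpow_mul ht.le,
          ENNReal.ofReal_mul (by positivity), ENNReal.ofReal_mul (by positivity),
          ENNReal.ofReal_mul (by positivity)]
        ring_nf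
    _ = _ := by
        rw [← ENNReal.ofReal_tsum_of_nonneg (fun j => by positivity)
          ((summable_add_one_rpow_mul_exp_neg_sq hd).mul_left _), tsum_mul_left]

lemma restrict_closedBall_apply_closedBall_le (μ : Measure X) (x : X) {d : ℝ} (hd : 0 ≤ d)
    {M : ℝ≥0∞} {ρ : ℝ} (hρ : 0 < ρ)
    (hμ : ∀ r ∈ Ioc 0 ρ, μ (closedBall x r) ≤ M * ENNReal.ofReal (r ^ d)) {r : ℝ} (hr : 0 < r) :
    μ.restrict (closedBall x ρ) (closedBall x r) ≤ M * ENNReal.ofReal (r ^ d) := by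
  rw [Measure.restrict_apply measurableSet_closedBall]
  rcases le_total r ρ with hrρ | hρr
  · exact (measure_mono inter_subset_left).trans (hμ r ⟨hr, hrρ⟩)
  · calc μ (closedBall x r ∩ closedBall x ρ) ≤ μ (closedBall x ρ) := measure_mono inter_subset_right
      _ ≤ M * ENNReal.ofReal (ρ ^ d) := hμ ρ ⟨hρ, le_rfl⟩
      _ ≤ M * ENNReal.ofReal (r ^ d) := by gcongr

lemma setLIntegral_compl_closedBall_exp_neg_dist_sq_le (μ : Measure X) (x : X) {ρ t : ℝ}
    (hρ : 0 ≤ ρ) (ht : 0 < t) (ht1 : t ≤ 1) :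
    ∫⁻ ξ in (closedBall x ρ)ᶜ, ENNReal.ofReal (Real.exp (-dist x ξ ^ 2 / (4 * t))) ∂μ ≤
      ENNReal.ofReal (Real.exp (-ρ ^ 2 / (8 * t))) *
        ∫⁻ ξ, ENNReal.ofReal (Real.exp (-dist x ξ ^ 2 / 8)) ∂μ := by
  calc ∫⁻ ξ in (closedBall x ρ)ᶜ, ENNReal.ofReal (Real.exp (-dist x ξ ^ 2 / (4 * t))) ∂μ
      ≤ ∫⁻ ξ in (closedBall x ρ)ᶜ, ENNReal.ofReal (Real.exp (-ρ ^ 2 / (8 * t))) *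
          ENNReal.ofReal (Real.exp (-dist x ξ ^ 2 / 8)) ∂μ := by
        refine setLIntegral_mono' measurableSet_closedBall.compl fun ξ hξ => ?_
        rw [← ENNReal.ofReal_mul (Real.exp_pos _).le]
        have hρξ : ρ < dist x ξ := by simpa [dist_comm] using hξ
        exact ENNReal.ofReal_le_ofReal (exp_neg_sq_div_le_mul hρξ.le hρ ht ht1)
    _ ≤ ∫⁻ ξ, ENNReal.ofReal (Real.exp (-ρ ^ 2 / (8 * t))) *
          ENNReal.ofReal (Real.exp (-dist x ξ ^ 2 / 8)) ∂μ := setLIntegral_le_lintegral _ _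
    _ = _ := lintegral_const_mul' _ _ ENNReal.ofReal_ne_top

theorem limsup_rpow_mul_lintegral_exp_neg_dist_sq_ne_top (μ : Measure X) (x : X) {d : ℝ}
    (hd : 0 ≤ d) {M : ℝ≥0∞} (hM : M ≠ ⊤)
    (hμ : ∀ᶠ r in 𝓝[>] 0, μ (closedBall x r) ≤ M * ENNReal.ofReal (r ^ d))
    (hJ : ∫⁻ ξ, ENNReal.ofReal (Real.exp (-dist x ξ ^ 2 / 8)) ∂μ ≠ ⊤) :
    limsup (fun t => ENNReal.ofReal (t ^ (-d / 2)) *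
      ∫⁻ ξ, ENNReal.ofReal (Real.exp (-dist x ξ ^ 2 / (4 * t))) ∂μ) (𝓝[>] 0) ≠ ⊤ := by
  obtain ⟨ε, hε, hεμ⟩ := (nhdsGT_basis (0 : ℝ)).eventually_iff.1 hμ
  have hρ : ∀ r ∈ Ioc 0 (ε / 2), μ (closedBall x r) ≤ M * ENNReal.ofReal (r ^ d) :=
    fun r hr => hεμ ⟨hr.1, by linarith [hr.2]⟩
  set K := ∑' j : ℕ, ((j : ℝ) + 1) ^ d * Real.exp (-(j : ℝ) ^ 2 / 4)
  have hfar : Tendsto (fun t => ENNReal.ofReal (t ^ (-d / 2) * Real.exp (-(ε / 2) ^ 2 / (8 * t))) *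
      ∫⁻ ξ, ENNReal.ofReal (Real.exp (-dist x ξ ^ 2 / 8)) ∂μ) (𝓝[>] 0) (𝓝 0) := by
    have h := ENNReal.Tendsto.mul_const (ENNReal.tendsto_ofReal
      (tendsto_rpow_mul_exp_neg_div_nhdsGT_zero (-d / 2) (b := (ε / 2) ^ 2 / 8) (by positivity)))
      (.inr hJ)
    rw [ENNReal.ofReal_zero, zero_mul] at h
    refine h.congr fun t => ?_
    ring_nf
  refine ne_top_of_le_ne_top (b := M * ENNReal.ofReal K + 1) (by finiteness)
    (limsup_le_of_le (by isBoundedDefault) ?_)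
  filter_upwards [Ioc_mem_nhdsGT one_pos, hfar.eventually (ge_mem_nhds zero_lt_one)]
    with t ⟨ht, ht1⟩ hft
  rw [← lintegral_add_compl _ (measurableSet_closedBall (x := x) (ε := ε / 2)), mul_add]
  gcongr ?_ + ?_
  · calc ENNReal.ofReal (t ^ (-d / 2)) * ∫⁻ ξ in closedBall x (ε / 2),
          ENNReal.ofReal (Real.exp (-dist x ξ ^ 2 / (4 * t))) ∂μ
        ≤ ENNReal.ofReal (t ^ (-d / 2)) * (M * ENNReal.ofReal (t ^ (d / 2) * K)) := by
          gcongr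
          exact lintegral_exp_neg_dist_sq_le _ x hd
            (fun r hr => restrict_closedBall_apply_closedBall_le μ x hd (half_pos hε) hρ hr) ht
      _ = M * ENNReal.ofReal K := by
          rw [mul_left_comm, ← ENNReal.ofReal_mul (by positivity), ← mul_assoc,
            ← Real.rpow_add ht, neg_div, neg_add_cancel, Real.rpow_zero, one_mul]
  · calc ENNReal.ofReal (t ^ (-d / 2)) * ∫⁻ ξ in (closedBall x (ε / 2))ᶜ,
          ENNReal.ofReal (Real.exp (-dist x ξ ^ 2 / (4 * t))) ∂μ
        ≤ ENNReal.ofReal (t ^ (-d / 2)) * (ENNReal.ofReal (Real.exp (-(ε / 2) ^ 2 / (8 * t))) *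
            ∫⁻ ξ, ENNReal.ofReal (Real.exp (-dist x ξ ^ 2 / 8)) ∂μ) := by
          gcongr
          exact setLIntegral_compl_closedBall_exp_neg_dist_sq_le μ x (half_pos hε).le ht ht1
      _ ≤ 1 := by rwa [← mul_assoc, ← ENNReal.ofReal_mul (by positivity)]

lemma isLocallyFiniteMeasure_of_lintegral_exp_neg_dist_sq_ne_top {μ : Measure X} {t : ℝ}
    (ht : 0 < t)
    (h : ∀ x, ∫⁻ ξ, ENNReal.ofReal (Real.exp (-dist x ξ ^ 2 / (4 * t))) ∂μ ≠ ⊤) :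
    IsLocallyFiniteMeasure μ := by
  refine ⟨fun x => ⟨closedBall x 1, closedBall_mem_nhds x one_pos,
    lt_top_iff_ne_top.2 fun htop => h x ?_⟩⟩
  have hle : ENNReal.ofReal (Real.exp (-1 ^ 2 / (4 * t))) * μ (closedBall x 1) ≤
      ∫⁻ ξ, ENNReal.ofReal (Real.exp (-dist x ξ ^ 2 / (4 * t))) ∂μ := by
    rw [← setLIntegral_const]
    refine (setLIntegral_mono' measurableSet_closedBall fun ξ hξ => ?_).trans
      (setLIntegral_le_lintegral _ _)
    refine ENNReal.ofReal_le_ofReal (Real.exp_le_exp.2 ?_)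
    rw [neg_div, neg_div, neg_le_neg_iff]
    gcongr
    rwa [mem_closedBall, dist_comm] at hξ
  rwa [htop, ENNReal.mul_top (by simp [Real.exp_pos]), top_le_iff] at hle

end GaussianMean

lemma ofReal_heatK {n : ℕ} (x ξ : EuclideanSpace ℝ (Fin n)) {t : ℝ} (ht : 0 < t) :
    ENNReal.ofReal (heatK n (x - ξ) t) = ENNReal.ofReal ((4 * Real.pi * t) ^ (-(n : ℝ) / 2)) *
      ENNReal.ofReal (Real.exp (-dist x ξ ^ 2 / (4 * t))) := by
  rw [heatK, dist_eq_norm, ENNReal.ofReal_mul (by positivity)]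

lemma lintegral_exp_neg_dist_sq_ne_top_of_lintegral_heatK_ne_top {n : ℕ}
    {μ : Measure (EuclideanSpace ℝ (Fin n))} {x : EuclideanSpace ℝ (Fin n)} {t : ℝ} (ht : 0 < t)
    (h : ∫⁻ ξ, ENNReal.ofReal (heatK n (x - ξ) t) ∂μ ≠ ⊤) :
    ∫⁻ ξ, ENNReal.ofReal (Real.exp (-dist x ξ ^ 2 / (4 * t))) ∂μ ≠ ⊤ := by
  simp_rw [ofReal_heatK x _ ht] at h
  rw [lintegral_const_mul' _ _ ENNReal.ofReal_ne_top] at h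
  exact fun htop =>
    h (ENNReal.mul_eq_top.2 (.inl ⟨(ENNReal.ofReal_pos.2 (by positivity)).ne', htop⟩))

lemma ofReal_rpow_mul_lintegral_heatK {n : ℕ} (α : ℝ) (μ : Measure (EuclideanSpace ℝ (Fin n)))
    (x : EuclideanSpace ℝ (Fin n)) {t : ℝ} (ht : 0 < t) :
    ENNReal.ofReal (t ^ (α / 2)) * ∫⁻ ξ, ENNReal.ofReal (heatK n (x - ξ) t) ∂μ =
      ENNReal.ofReal ((4 * Real.pi) ^ (-(n : ℝ) / 2)) * (ENNReal.ofReal (t ^ (-((n : ℝ) - α) / 2)) *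
        ∫⁻ ξ, ENNReal.ofReal (Real.exp (-dist x ξ ^ 2 / (4 * t))) ∂μ) := by
  simp_rw [ofReal_heatK x _ ht]
  rw [lintegral_const_mul' _ _ ENNReal.ofReal_ne_top, ← mul_assoc, ← mul_assoc,
    ← ENNReal.ofReal_mul (by positivity), ← ENNReal.ofReal_mul (by positivity)]
  congr 2
  rw [Real.mul_rpow (by positivity) ht.le, mul_left_comm, ← Real.rpow_add ht]
  ring_nf

theorem stmt4 (n : ℕ) (α : ℝ) (hα : α ∈ Icc (0 : ℝ) n)
    (μ : Measure (EuclideanSpace ℝ (Fin n)))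
    (hfin : ∀ (x : EuclideanSpace ℝ (Fin n)) (t : ℝ), 0 < t →
      (∫⁻ ξ, ENNReal.ofReal (heatK n (x - ξ) t) ∂μ) ≠ ⊤) :
    μH[(n : ℝ) - α] {x : EuclideanSpace ℝ (Fin n) |
        limsup (fun t : ℝ =>
            ENNReal.ofReal (t ^ (α / 2)) *
              ∫⁻ ξ, ENNReal.ofReal (heatK n (x - ξ) t) ∂μ)
          (nhdsWithin 0 (Ioi 0)) = ⊤} = 0 := by
  have hexp x t (ht : 0 < t) :=
    lintegral_exp_neg_dist_sq_ne_top_of_lintegral_heatK_ne_top ht (hfin x t ht)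
  have : IsLocallyFiniteMeasure μ :=
    isLocallyFiniteMeasure_of_lintegral_exp_neg_dist_sq_ne_top one_pos fun x => hexp x 1 one_pos
  refine measure_mono_null (fun x hx => ?_)
    (hausdorffMeasure_setOf_frequently_le_measure_closedBall_eq_zero μ (sub_nonneg.2 hα.2))
  intro M
  by_contra! hM
  have hJ : ∫⁻ ξ, ENNReal.ofReal (Real.exp (-dist x ξ ^ 2 / 8)) ∂μ ≠ ⊤ := by
    simpa only [show (4 : ℝ) * 2 = 8 by norm_num] using hexp x 2 two_pos
  refine ENNReal.mul_ne_top (ENNReal.ofReal_ne_top (r := (4 * Real.pi) ^ (-(n : ℝ) / 2)))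
    (limsup_rpow_mul_lintegral_exp_neg_dist_sq_ne_top μ x (sub_nonneg.2 hα.2) ENNReal.coe_ne_top
      (hM.mono fun r hr => hr.le) hJ) ?_
  rw [← ENNReal.limsup_const_mul_of_ne_top ENNReal.ofReal_ne_top]
  refine (limsup_congr ?_).symm.trans hx
  filter_upwards [self_mem_nhdsWithin] with t ht using ofReal_rpow_mul_lintegral_heatK α μ x ht
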